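/- Let n ≥ 1 and q ≥ 4, and let G(n,q) be the Lee graph. Then χ_2(G(n,q)) ≥ 2n + 1; moreover, if −1 is not an adjacency eigenvalue of G(n,q), then χ_2(G(n,q)) ≥ 2n + 2; and in the special case n = 1, q = 5 one has χ_2(G(1,5)) ≥ 5. -/

import Mathlib

open Finset Polynomial

/-- The `t`-th power graph: vertices are adjacent when they are distinct and at
graph (geodesic) distance at most `t` in `G`. -/
def powerGraph {V : Type*} (G : SimpleGraph V) (t : ℕ) : SimpleGraph V where
  Adj u v := u ≠ v ∧ G.Reachable u v ∧ G.dist u v ≤ t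
  symm := ⟨by
    rintro u v ⟨h1, h2, h3⟩
    exact ⟨h1.symm, h2.symm, by rwa [SimpleGraph.dist_comm]⟩⟩
  loopless := ⟨fun v h => h.1 rfl⟩

/-- The distance-`t` chromatic number of a graph. -/
noncomputable def distChromaticNumber {V : Type*} (G : SimpleGraph V) (t : ℕ) : ℕ∞ :=
  (powerGraph G t).chromaticNumber

/-- `x` is an eigenvalue of the (real) adjacency matrix of `G`. -/
def IsAdjEigenvalue {V : Type*} [Fintype V] [DecidableEq V] (G : SimpleGraph V)
    [DecidableRel G.Adj] (x : ℝ) : Prop :=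
  ∃ v : V → ℝ, v ≠ 0 ∧ (SimpleGraph.adjMatrix ℝ G).mulVec v = x • v

/-- The hypercube graph `Q_n`. -/
def hypercube (n : ℕ) : SimpleGraph (Fin n → Fin 2) where
  Adj u v := hammingDist u v = 1
  symm := ⟨fun u v h => by show hammingDist v u = 1; rw [hammingDist_comm]; exact h⟩
  loopless := ⟨fun u h => by simp only [hammingDist_self] at h; exact absurd h (by norm_num)⟩

noncomputable instance (n : ℕ) : DecidableRel (hypercube n).Adj :=
  fun _ _ => Classical.dec _

/-- The Lee graph `G(n,q)`: the `n`-fold Cartesian product of the `q`-cycle. -/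
def leeGraph (n q : ℕ) : SimpleGraph (Fin n → ZMod q) where
  Adj u v := u ≠ v ∧ ∃ i, (u i = v i + 1 ∨ v i = u i + 1) ∧ ∀ j, j ≠ i → u j = v j
  symm := ⟨by
    rintro u v ⟨hne, i, h, hj⟩
    exact ⟨hne.symm, i, h.symm, fun j hji => (hj j hji).symm⟩⟩
  loopless := ⟨fun u h => h.1 rfl⟩

noncomputable instance (n q : ℕ) : DecidableRel (leeGraph n q).Adj :=
  fun _ _ => Classical.dec _

/-- The Lee distance on `(ℤ/qℤ)^n`. -/
def leeDist {n q : ℕ} (b c : Fin n → ZMod q) : ℕ :=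
  ∑ i, min ((b i - c i).val) (q - (b i - c i).val)

section Lee
variable {n q : ℕ} [NeZero q]

def ee (n q : ℕ) (i : Fin n) : Fin n → ZMod q := fun j => if j = i then 1 else 0

lemma leeOne_ne_zero (hq : 4 ≤ q) : (1 : ZMod q) ≠ 0 := by
  haveI : Fact (1 < q) := ⟨by omega⟩
  exact one_ne_zero

lemma leeTwo_ne_zero (hq : 4 ≤ q) : (1 : ZMod q) + 1 ≠ 0 := by
  have : ((2 : ℕ) : ZMod q) ≠ 0 := by
    intro h
    rw [ZMod.natCast_eq_zero_iff] at h
    exact absurd (Nat.le_of_dvd (by norm_num) h) (by omega)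
  simpa [one_add_one_eq_two] using this

lemma lee_adj (hq : 4 ≤ q) (u v : Fin n → ZMod q) :
    (leeGraph n q).Adj u v ↔ ∃ i, v = u + ee n q i ∨ v = u - ee n q i := by
  constructor
  · rintro ⟨hne, i, h | h, hj⟩
    · refine ⟨i, Or.inr (funext fun j => ?_)⟩
      by_cases hji : j = i
      · subst hji; simp [ee, h]
      · simp [ee, hji, hj j hji]
    · refine ⟨i, Or.inl (funext fun j => ?_)⟩
      by_cases hji : j = i
      · subst hji; simp [ee, h]
      · simp [ee, hji, hj j hji]
  · rintro ⟨i, rfl | rfl⟩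
    · refine ⟨fun h => ?_, i, Or.inr (by simp [ee]), fun j hji => by simp [ee, hji]⟩
      have := congrFun h i
      simp only [Pi.add_apply, ee, eq_self_iff_true, if_true] at this
      exact leeOne_ne_zero hq (by linear_combination -this)
    · refine ⟨fun h => ?_, i, Or.inl (by simp [ee]), fun j hji => by simp [ee, hji]⟩
      have := congrFun h i
      simp only [Pi.sub_apply, ee, eq_self_iff_true, if_true] at this
      exact leeOne_ne_zero hq (by linear_combination this)

lemma adj_add (hq : 4 ≤ q) (u : Fin n → ZMod q) (i : Fin n) :
    (leeGraph n q).Adj u (u + ee n q i) := (lee_adj hq u _).2 ⟨i, Or.inl rfl⟩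

lemma adj_sub (hq : 4 ≤ q) (u : Fin n → ZMod q) (i : Fin n) :
    (leeGraph n q).Adj u (u - ee n q i) := (lee_adj hq u _).2 ⟨i, Or.inr rfl⟩

def nbr (u : Fin n → ZMod q) : Fin n ⊕ Fin n → (Fin n → ZMod q)
  | .inl i => u + ee n q i
  | .inr i => u - ee n q i

lemma nbr_injective (hq : 4 ≤ q) (u : Fin n → ZMod q) : Function.Injective (nbr (q := q) u) := by
  have h1 := leeOne_ne_zero hq
  have h2 := leeTwo_ne_zero hq
  rintro (i | i) (j | j) h <;> simp only [nbr] at h <;>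
    [skip; skip; skip; skip]
  · by_cases hij : i = j
    · exact congrArg _ hij
    · have := congrFun h i
      simp only [Pi.add_apply, ee, eq_self_iff_true, if_true, if_neg hij] at this
      exact absurd (by linear_combination this) h1
  · have := congrFun h i
    by_cases hij : i = j
    · subst hij
      simp only [Pi.add_apply, Pi.sub_apply, ee, eq_self_iff_true, if_true] at this
      exact absurd (by linear_combination this) h2
    · simp only [Pi.add_apply, Pi.sub_apply, ee, eq_self_iff_true, if_true, if_neg hij] at this
      exact absurd (by linear_combination this) h1
  · have := congrFun h i
    by_cases hij : i = j
    · subst hij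
      simp only [Pi.add_apply, Pi.sub_apply, ee, eq_self_iff_true, if_true] at this
      exact absurd (by linear_combination -this) h2
    · simp only [Pi.add_apply, Pi.sub_apply, ee, eq_self_iff_true, if_true, if_neg hij] at this
      exact absurd (by linear_combination -this) h1
  · by_cases hij : i = j
    · exact congrArg _ hij
    · have := congrFun h i
      simp only [Pi.sub_apply, ee, eq_self_iff_true, if_true, if_neg hij] at this
      exact absurd (by linear_combination -this) h1

lemma neighborFinset_eq (hq : 4 ≤ q) (u : Fin n → ZMod q) :
    (leeGraph n q).neighborFinset u = Finset.univ.image (nbr u) := by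
  ext x
  simp only [SimpleGraph.mem_neighborFinset, lee_adj hq, Finset.mem_image, Finset.mem_univ,
    true_and]
  constructor
  · rintro ⟨i, rfl | rfl⟩
    exacts [⟨.inl i, rfl⟩, ⟨.inr i, rfl⟩]
  · rintro ⟨(i | i), rfl⟩
    exacts [⟨i, Or.inl rfl⟩, ⟨i, Or.inr rfl⟩]

lemma degree_eq (hq : 4 ≤ q) (u : Fin n → ZMod q) :
    ((leeGraph n q).neighborFinset u).card = 2 * n := by
  rw [neighborFinset_eq hq, Finset.card_image_of_injective _ (nbr_injective hq u)]
  simp [two_mul]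

lemma ball_card (hq : 4 ≤ q) (u : Fin n → ZMod q) :
    (insert u ((leeGraph n q).neighborFinset u)).card = 2 * n + 1 := by
  rw [Finset.card_insert_of_notMem (by simp), degree_eq hq]

lemma lee_pow_adj (hq : 4 ≤ q) {u x y : Fin n → ZMod q}
    (hx : x = u ∨ (leeGraph n q).Adj u x) (hy : y = u ∨ (leeGraph n q).Adj u y)
    (hxy : x ≠ y) : (powerGraph (leeGraph n q) 2).Adj x y := by
  have key : ∀ z, (z = u ∨ (leeGraph n q).Adj u z) →
      ∃ w : (leeGraph n q).Walk z u, w.length ≤ 1 := by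
    rintro z (rfl | h)
    · exact ⟨.nil, by simp⟩
    · exact ⟨h.symm.toWalk, by simp⟩
  obtain ⟨w1, hw1⟩ := key x hx
  obtain ⟨w2, hw2⟩ := key y hy
  refine ⟨hxy, ⟨w1.append w2.reverse⟩,
    (SimpleGraph.dist_le (w1.append w2.reverse)).trans ?_⟩
  rw [SimpleGraph.Walk.length_append, SimpleGraph.Walk.length_reverse]
  omega

lemma mem_ball_iff (hq : 4 ≤ q) {u x : Fin n → ZMod q} :
    x ∈ insert u ((leeGraph n q).neighborFinset u) ↔ x = u ∨ (leeGraph n q).Adj u x := by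
  simp [Finset.mem_insert, SimpleGraph.mem_neighborFinset]

lemma ball_clique (hq : 4 ≤ q) (u : Fin n → ZMod q) :
    (powerGraph (leeGraph n q) 2).IsClique
      ((insert u ((leeGraph n q).neighborFinset u) : Finset _) : Set _) := by
  intro x hx y hy hxy
  exact lee_pow_adj hq ((mem_ball_iff hq).1 (Finset.mem_coe.1 hx))
    ((mem_ball_iff hq).1 (Finset.mem_coe.1 hy)) hxy

lemma part1 (hq : 4 ≤ q) :
    ((2 * n + 1 : ℕ) : ℕ∞) ≤ (powerGraph (leeGraph n q) 2).chromaticNumber := by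
  have h := (ball_clique hq (0 : Fin n → ZMod q)).card_le_chromaticNumber
  rwa [ball_card hq] at h

lemma neg_one_eig (hn : 1 ≤ n) (hq : 4 ≤ q)
    (h : (powerGraph (leeGraph n q) 2).Colorable (2 * n + 1)) :
    ∃ v : (Fin n → ZMod q) → ℝ, v ≠ 0 ∧
      (SimpleGraph.adjMatrix ℝ (leeGraph n q)).mulVec v = (-1 : ℝ) • v := by
  classical
  obtain ⟨C⟩ := h
  set G := leeGraph n q with hG
  have hinj : ∀ u : Fin n → ZMod q,
      Set.InjOn C ((insert u (G.neighborFinset u) : Finset _) : Set _) := by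
    intro u x hx y hy hxy
    by_contra hne
    exact C.valid (lee_pow_adj hq ((mem_ball_iff hq).1 (Finset.mem_coe.1 hx))
      ((mem_ball_iff hq).1 (Finset.mem_coe.1 hy)) hne) hxy
  have himg : ∀ u : Fin n → ZMod q,
      (insert u (G.neighborFinset u)).image C = Finset.univ := by
    intro u
    apply Finset.eq_univ_of_card
    rw [Finset.card_image_of_injOn (hinj u), ball_card hq]
    simp
  have hcount : ∀ (u : Fin n → ZMod q) (c : Fin (2 * n + 1)),
      ((G.neighborFinset u).filter (fun x => C x = c)).card
        = if C u = c then 0 else 1 := by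
    intro u c
    by_cases hc : C u = c
    · rw [if_pos hc, Finset.card_eq_zero, Finset.filter_eq_empty_iff]
      intro x hx hCx
      rw [SimpleGraph.mem_neighborFinset] at hx
      have hadj := hx
      exact C.valid (lee_pow_adj hq (Or.inl rfl) (Or.inr hadj) hadj.ne) (hc.trans hCx.symm)
    · rw [if_neg hc]
      have hmem : c ∈ (insert u (G.neighborFinset u)).image C := by
        rw [himg u]; exact Finset.mem_univ c
      obtain ⟨x₀, hx₀, hCx₀⟩ := Finset.mem_image.1 hmem
      have hx₀N : x₀ ∈ G.neighborFinset u := by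
        rcases Finset.mem_insert.1 hx₀ with rfl | h
        · exact absurd hCx₀ hc
        · exact h
      rw [Finset.card_eq_one]
      refine ⟨x₀, ?_⟩
      ext y
      simp only [Finset.mem_filter, Finset.mem_singleton]
      constructor
      · rintro ⟨hyN, hCy⟩
        exact hinj u (Finset.mem_coe.2 (Finset.mem_insert_of_mem hyN))
          (Finset.mem_coe.2 hx₀) (hCy.trans hCx₀.symm)
      · rintro rfl
        exact ⟨hx₀N, hCx₀⟩
  set c := C 0 with hc0
  set t : ℝ := 1 / (2 * (n : ℝ) + 1) with ht
  have hpos : (0 : ℝ) < 2 * (n : ℝ) + 1 := by positivity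
  have ht1 : t < 1 := by
    rw [ht, div_lt_one hpos]
    have : (1 : ℝ) ≤ (n : ℝ) := by exact_mod_cast hn
    linarith
  refine ⟨fun v => (if C v = c then 1 else 0) - t, ?_, ?_⟩
  · intro h0
    have := congrFun h0 0
    simp only [if_pos hc0.symm, Pi.zero_apply, if_true] at this
    linarith [this]
  · funext u
    rw [Matrix.mulVec, SimpleGraph.adjMatrix_dotProduct]
    have hdeg := degree_eq hq u
    have hcnt := hcount u c
    rw [Finset.sum_sub_distrib, Finset.sum_const, Finset.sum_boole, hcnt, hdeg]
    simp only [Pi.smul_apply, smul_eq_mul, nsmul_eq_mul]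
    by_cases hCu : C u = c
    · rw [if_pos hCu, if_pos hCu]
      push_cast
      rw [ht]
      field_simp
      ring
    · rw [if_neg hCu, if_neg hCu]
      push_cast
      rw [ht]
      field_simp
      ring

lemma part3 : ((5 : ℕ) : ℕ∞) ≤ (powerGraph (leeGraph 1 5) 2).chromaticNumber := by
  have hq5 : (4 : ℕ) ≤ 5 := by norm_num
  have hdec : ∀ d : ZMod 5, d ≠ 0 → d = 1 ∨ d = 1 + 1 ∨ d = -(1 + 1) ∨ d = -1 := by decide
  have hclique : (powerGraph (leeGraph 1 5) 2).IsClique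
      ((Finset.univ : Finset (Fin 1 → ZMod 5)) : Set _) := by
    intro u _ v _ huv
    set d : ZMod 5 := v 0 - u 0 with hd
    have hvj : ∀ j : Fin 1, v j = u j + d := by
      intro j
      have hj : j = 0 := Subsingleton.elim j 0
      subst hj
      rw [hd]; ring
    have hdne : d ≠ 0 := by
      intro h0
      apply huv
      funext j
      have hj : j = 0 := Subsingleton.elim j 0
      subst hj
      have := hvj 0
      rw [h0, add_zero] at this
      exact this.symm
    have hee : ∀ j : Fin 1, ee 1 5 0 j = 1 := by
      intro j
      have hj : j = 0 := Subsingleton.elim j 0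
      subst hj
      simp [ee]
    rcases hdec d hdne with h1 | h2 | h3 | h4
    · have hv : v = u + ee 1 5 0 := funext fun j => by rw [hvj j, h1, Pi.add_apply, hee j]
      subst hv
      have hadj := adj_add hq5 u 0
      exact ⟨huv, ⟨hadj.toWalk⟩, (SimpleGraph.dist_le hadj.toWalk).trans (by simp)⟩
    · have hv : v = u + ee 1 5 0 + ee 1 5 0 := funext fun j => by
        rw [hvj j, h2, Pi.add_apply, Pi.add_apply, hee j]; ring
      subst hv
      exact ⟨huv, ⟨SimpleGraph.Walk.cons (adj_add hq5 u 0) (adj_add hq5 (u + ee 1 5 0) 0).toWalk⟩,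
        (SimpleGraph.dist_le (SimpleGraph.Walk.cons (adj_add hq5 u 0)
          (adj_add hq5 (u + ee 1 5 0) 0).toWalk)).trans (by simp)⟩
    · have hv : v = u - ee 1 5 0 - ee 1 5 0 := funext fun j => by
        rw [hvj j, h3, Pi.sub_apply, Pi.sub_apply, hee j]; ring
      subst hv
      exact ⟨huv, ⟨SimpleGraph.Walk.cons (adj_sub hq5 u 0) (adj_sub hq5 (u - ee 1 5 0) 0).toWalk⟩,
        (SimpleGraph.dist_le (SimpleGraph.Walk.cons (adj_sub hq5 u 0)
          (adj_sub hq5 (u - ee 1 5 0) 0).toWalk)).trans (by simp)⟩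
    · have hv : v = u - ee 1 5 0 := funext fun j => by
        rw [hvj j, h4, Pi.sub_apply, hee j]; ring
      subst hv
      have hadj := adj_sub hq5 u 0
      exact ⟨huv, ⟨hadj.toWalk⟩, (SimpleGraph.dist_le hadj.toWalk).trans (by simp)⟩
  have h := hclique.card_le_chromaticNumber
  have hcard : (Finset.univ : Finset (Fin 1 → ZMod 5)).card = 5 := by
    rw [Finset.card_univ]
    simp [Fintype.card_fun, ZMod.card]
  rwa [hcard] at h

theorem stmt17' (n q : ℕ) [NeZero q] (hn : 1 ≤ n) (hq : 4 ≤ q) :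
    ((2 * (n : ℕ∞) + 1) ≤ (powerGraph (leeGraph n q) 2).chromaticNumber) ∧
    ((¬ ∃ v : (Fin n → ZMod q) → ℝ, v ≠ 0 ∧
        (SimpleGraph.adjMatrix ℝ (leeGraph n q)).mulVec v = (-1 : ℝ) • v) →
      (2 * (n : ℕ∞) + 2) ≤ (powerGraph (leeGraph n q) 2).chromaticNumber) ∧
    ((5 : ℕ∞) ≤ (powerGraph (leeGraph 1 5) 2).chromaticNumber) := by
  refine ⟨?_, ?_, ?_⟩
  · have h := part1 (n := n) (q := q) hq
    have : ((2 * n + 1 : ℕ) : ℕ∞) = 2 * (n : ℕ∞) + 1 := by push_cast; ring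
    rwa [this] at h
  · intro hne
    by_contra hlt
    push_neg at hlt
    have hcast : (2 * (n : ℕ∞) + 2) = ((2 * n + 1 : ℕ) : ℕ∞) + 1 := by push_cast; ring
    rw [hcast, ENat.lt_add_one_iff (ENat.coe_ne_top _)] at hlt
    have hcol := SimpleGraph.chromaticNumber_le_iff_colorable.1 hlt
    exact hne (neg_one_eig hn hq hcol)
  · exact_mod_cast part3

end Lee

/-- for `n ≥ 1`, `q ≥ 4`: `χ₂(G(n,q)) ≥ 2n + 1`; if `−1` is not an
eigenvalue of `G(n,q)` then `χ₂(G(n,q)) ≥ 2n + 2`; and `χ₂(G(1,5)) ≥ 5`. -/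
theorem stmt17 (n q : ℕ) [NeZero q] (hn : 1 ≤ n) (hq : 4 ≤ q) :
    ((2 * (n : ℕ∞) + 1) ≤ distChromaticNumber (leeGraph n q) 2) ∧
    (¬ IsAdjEigenvalue (leeGraph n q) (-1) →
      (2 * (n : ℕ∞) + 2) ≤ distChromaticNumber (leeGraph n q) 2) ∧
    ((5 : ℕ∞) ≤ distChromaticNumber (leeGraph 1 5) 2) := by
  obtain ⟨h1, h2, h3⟩ := stmt17' n q hn hq
  exact ⟨h1, fun h => h2 h, h3⟩
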